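/- Let A be a commutative algebra over 𝕂 which is simultaneously a bounded algebra, and let M, N, P be bounded A-modules. Then there are bornological isomorphisms L^b_A(M ⊗_A^β N, P) ≅ L^b_A(M, N; P) ≅ L^b_A(M, L^b_A(N, P)) ≅ L^b_A(N, L^b_A(M, P)). Moreover, if A, M, N, P are locally convex, there is an algebraic vector space isomorphism L^c_A(M, N; P) ≅ L^c_A(M ⊗_A^π N, P). -/

import Mathlib

/-!
STATEMENT 11: for a commutative bounded algebra `A` and bounded `A`-modules
`M, N, P` there are bornological isomorphisms
`L^b_A(M ⊗_A^β N, P) ≅ L^b_A(M,N;P) ≅ L^b_A(M, L^b_A(N,P)) ≅ L^b_A(N, L^b_A(M,P))`;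
moreover, in the locally convex case there is an algebraic vector space isomorphism
`L^c_A(M,N;P) ≅ L^c_A(M ⊗_A^π N, P)`.
-/

open MulOpposite Set
open scoped TensorProduct Pointwise

/-- Convexity expressed through the real scalars of `𝕜` (`𝕜` = ℝ or ℂ). -/
def RCConvex (𝕜 : Type*) [RCLike 𝕜] {E : Type*} [AddCommGroup E] [Module 𝕜 E]
    (s : Set E) : Prop :=
  ∀ ⦃x⦄, x ∈ s → ∀ ⦃y⦄, y ∈ s → ∀ t : ℝ, 0 ≤ t → t ≤ 1 →
    ((t : 𝕜) • x + (((1 - t : ℝ) : 𝕜)) • y) ∈ s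

/-- `τ` is a linear topology: addition and scalar multiplication continuous. -/
def IsLinearTop (𝕜 : Type*) [RCLike 𝕜] (E : Type*) [AddCommGroup E] [Module 𝕜 E]
    (τ : TopologicalSpace E) : Prop :=
  @IsTopologicalAddGroup E τ _ ∧ @ContinuousSMul 𝕜 E _ _ τ

/-- `τ` is a locally convex topology. -/
def IsLCTop (𝕜 : Type*) [RCLike 𝕜] (E : Type*) [AddCommGroup E] [Module 𝕜 E]
    (τ : TopologicalSpace E) : Prop :=
  IsLinearTop 𝕜 E τ ∧ ∀ U ∈ @nhds E τ 0, ∃ V ∈ @nhds E τ 0, V ⊆ U ∧ RCConvex 𝕜 V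

/-- von Neumann boundedness for an explicitly given topology. -/
def VNBdd (𝕜 : Type*) [RCLike 𝕜] {E : Type*} [AddCommGroup E] [Module 𝕜 E]
    (τ : TopologicalSpace E) (s : Set E) : Prop :=
  ∀ V ∈ @nhds E τ 0, Absorbs 𝕜 V s

/-- `f` maps von Neumann bounded sets to von Neumann bounded sets. -/
def BddMap (𝕜 : Type*) [RCLike 𝕜] {E F : Type*} [AddCommGroup E] [Module 𝕜 E]
    [AddCommGroup F] [Module 𝕜 F]
    (τE : TopologicalSpace E) (τF : TopologicalSpace F) (f : E → F) : Prop :=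
  ∀ s : Set E, VNBdd 𝕜 τE s → VNBdd 𝕜 τF (f '' s)

/-- A family `S` of maps is (equi-)bounded: this is exactly von Neumann boundedness
of `S` in the topology of uniform convergence on bounded sets. -/
def FamBdd (𝕜 : Type*) [RCLike 𝕜] {E F : Type*} [AddCommGroup E] [Module 𝕜 E]
    [AddCommGroup F] [Module 𝕜 F]
    (τE : TopologicalSpace E) (τF : TopologicalSpace F) (S : Set (E → F)) : Prop :=
  ∀ s : Set E, VNBdd 𝕜 τE s → VNBdd 𝕜 τF (⋃ f ∈ S, f '' s)

/-- `𝕜`-bilinearity of a map on a product. -/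
def IsBilinMap (𝕜 : Type*) [RCLike 𝕜] {M N E : Type*} [AddCommGroup M] [Module 𝕜 M]
    [AddCommGroup N] [Module 𝕜 N] [AddCommGroup E] [Module 𝕜 E]
    (f : M × N → E) : Prop :=
  (∀ m m' n, f (m + m', n) = f (m, n) + f (m', n)) ∧
  (∀ (c : 𝕜) m n, f (c • m, n) = c • f (m, n)) ∧
  (∀ m n n', f (m, n + n') = f (m, n) + f (m, n')) ∧
  (∀ (c : 𝕜) m n, f (m, c • n) = c • f (m, n))

/-- `f` is `A`-balanced: `f (m·a, n) = f (m, a·n)`; the right `A`-module structure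
on `M` is given by a `Aᵐᵒᵖ`-module structure. -/
def IsBalancedMap (A : Type*) [Ring A] {M N E : Type*} [AddCommGroup M]
    [Module Aᵐᵒᵖ M] [AddCommGroup N] [Module A N] (f : M × N → E) : Prop :=
  ∀ (a : A) (m : M) (n : N), f (op a • m, n) = f (m, a • n)

/-- `τ` is the projective tensor product topology on `M ⊗[𝕜] N`: the finest locally
convex topology making the canonical bilinear map continuous. -/
def IsProjTensorTop (𝕜 : Type*) [RCLike 𝕜] {M N : Type*} [AddCommGroup M] [Module 𝕜 M]
    [AddCommGroup N] [Module 𝕜 N] (τM : TopologicalSpace M) (τN : TopologicalSpace N)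
    (τ : TopologicalSpace (TensorProduct 𝕜 M N)) : Prop :=
  IsLCTop 𝕜 (TensorProduct 𝕜 M N) τ ∧
  @Continuous (M × N) (TensorProduct 𝕜 M N) (@instTopologicalSpaceProd M N τM τN) τ
    (fun p => p.1 ⊗ₜ[𝕜] p.2) ∧
  ∀ τ' : TopologicalSpace (TensorProduct 𝕜 M N), IsLCTop 𝕜 (TensorProduct 𝕜 M N) τ' →
    @Continuous (M × N) (TensorProduct 𝕜 M N) (@instTopologicalSpaceProd M N τM τN) τ'
      (fun p => p.1 ⊗ₜ[𝕜] p.2) → τ ≤ τ'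

/-- `τ` is the bornological tensor product topology on `M ⊗[𝕜] N`: the finest locally
convex topology making the canonical bilinear map bounded. -/
def IsBetaTensorTop (𝕜 : Type*) [RCLike 𝕜] {M N : Type*} [AddCommGroup M] [Module 𝕜 M]
    [AddCommGroup N] [Module 𝕜 N] (τM : TopologicalSpace M) (τN : TopologicalSpace N)
    (τ : TopologicalSpace (TensorProduct 𝕜 M N)) : Prop :=
  IsLCTop 𝕜 (TensorProduct 𝕜 M N) τ ∧
  BddMap 𝕜 (@instTopologicalSpaceProd M N τM τN) τ (fun p : M × N => p.1 ⊗ₜ[𝕜] p.2) ∧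
  ∀ τ' : TopologicalSpace (TensorProduct 𝕜 M N), IsLCTop 𝕜 (TensorProduct 𝕜 M N) τ' →
    BddMap 𝕜 (@instTopologicalSpaceProd M N τM τN) τ' (fun p : M × N => p.1 ⊗ₜ[𝕜] p.2) →
      τ ≤ τ'

/-- The subspace `J₀` of `M ⊗[𝕜] N` spanned by the elements `m·a ⊗ n - m ⊗ a·n`. -/
def balancedRel (𝕜 A : Type*) [RCLike 𝕜] [Ring A] [Algebra 𝕜 A] (M N : Type*)
    [AddCommGroup M] [Module 𝕜 M] [Module Aᵐᵒᵖ M]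
    [AddCommGroup N] [Module 𝕜 N] [Module A N] :
    Submodule 𝕜 (TensorProduct 𝕜 M N) :=
  Submodule.span 𝕜
    {x | ∃ (a : A) (m : M) (n : N), x = (op a • m) ⊗ₜ[𝕜] n - m ⊗ₜ[𝕜] (a • n)}

/-- The subspace `J₀` for modules over a commutative algebra `A`. -/
def balancedRelComm (𝕜 A : Type*) [RCLike 𝕜] [CommRing A] [Algebra 𝕜 A] (M N : Type*)
    [AddCommGroup M] [Module 𝕜 M] [Module A M]
    [AddCommGroup N] [Module 𝕜 N] [Module A N] :
    Submodule 𝕜 (TensorProduct 𝕜 M N) :=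
  Submodule.span 𝕜
    {x | ∃ (a : A) (m : M) (n : N), x = (a • m) ⊗ₜ[𝕜] n - m ⊗ₜ[𝕜] (a • n)}

/-- `A`-bilinearity (on top of `𝕜`-bilinearity) for commutative `A`. -/
def IsABilinMap (A : Type*) [CommRing A] {M N P : Type*} [AddCommGroup M] [Module A M]
    [AddCommGroup N] [Module A N] [AddCommGroup P] [Module A P]
    (f : M × N → P) : Prop :=
  (∀ (a : A) (m : M) (n : N), f (a • m, n) = a • f (m, n)) ∧
  (∀ (a : A) (m : M) (n : N), f (m, a • n) = a • f (m, n))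

/-- Boundedness of a family of curried maps (= boundedness in
`L^b_A(M, L^b_A(N, P))` with the topology of uniform convergence on bounded sets). -/
def CurFamBdd (𝕜 : Type*) [RCLike 𝕜] {M N P : Type*} [AddCommGroup M] [Module 𝕜 M]
    [AddCommGroup N] [Module 𝕜 N] [AddCommGroup P] [Module 𝕜 P]
    (τM : TopologicalSpace M) (τN : TopologicalSpace N) (τP : TopologicalSpace P)
    (S : Set (M → N → P)) : Prop :=
  ∀ B : Set M, VNBdd 𝕜 τM B → FamBdd 𝕜 τN τP (⋃ h ∈ S, h '' B)

/-- `h` is a bounded `A`-linear map `M → L^b_A(N, P)`. -/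
def IsCurriedBddAHom (𝕜 : Type*) [RCLike 𝕜] (A : Type*) [CommRing A] {M N P : Type*}
    [AddCommGroup M] [Module 𝕜 M] [Module A M]
    [AddCommGroup N] [Module 𝕜 N] [Module A N]
    [AddCommGroup P] [Module 𝕜 P] [Module A P]
    (τM : TopologicalSpace M) (τN : TopologicalSpace N) (τP : TopologicalSpace P)
    (h : M → N → P) : Prop :=
  (∀ m m', h (m + m') = h m + h m') ∧
  (∀ (c : 𝕜) m, h (c • m) = c • h m) ∧
  (∀ (a : A) m, h (a • m) = a • h m) ∧
  (∀ m n n', h m (n + n') = h m n + h m n') ∧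
  (∀ m (c : 𝕜) n, h m (c • n) = c • h m n) ∧
  (∀ m (a : A) n, h m (a • n) = a • h m n) ∧
  (∀ m, BddMap 𝕜 τN τP (h m)) ∧
  (∀ B : Set M, VNBdd 𝕜 τM B → FamBdd 𝕜 τN τP (h '' B))

/-!
The bornological tensor topology is the finest locally convex topology making `⊗` bounded, so a
linear map on `M ⊗[𝕜] N` into a locally convex space is continuous for it exactly when its
composite with `⊗` is bounded. Passing to the quotient by the closure `J` of the balancing
relations, bounded linear maps on `M ⊗_A^β N` therefore correspond to bounded `A`-bilinear maps;
the projective case is the same argument with "continuous" in place of "bounded". For families,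
the topology of uniform convergence on an equibounded family is again locally convex and makes `⊗`
bounded, so the family is equicontinuous for the bornological tensor topology and hence
equibounded on the quotient. The remaining isomorphisms are currying, since a subset of `M × N` is
bounded iff it lies in a product of bounded sets.
-/

open Bornology Filter Topology

section Bornology

variable {𝕜 : Type*} [RCLike 𝕜] {E F G : Type*} [AddCommGroup E] [Module 𝕜 E]
  [AddCommGroup F] [Module 𝕜 F] [AddCommGroup G] [Module 𝕜 G]

theorem VNBdd.subset {τ : TopologicalSpace E} {s t : Set E} (hst : s ⊆ t) (ht : VNBdd 𝕜 τ t) :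
    VNBdd 𝕜 τ s :=
  fun V hV => (ht V hV).mono_right hst

theorem vnbdd_singleton [TopologicalSpace E] [ContinuousSMul 𝕜 E] (x : E) :
    VNBdd 𝕜 inferInstance {x} :=
  fun _ hV => isVonNBounded_singleton x hV

theorem VNBdd.prod [TopologicalSpace E] [TopologicalSpace F] {s : Set E} {t : Set F}
    (hs : VNBdd 𝕜 inferInstance s) (ht : VNBdd 𝕜 inferInstance t) :
    VNBdd 𝕜 inferInstance (s ×ˢ t) := by
  intro V hV
  obtain ⟨U₁, hU₁, U₂, hU₂, hU⟩ := mem_nhds_prod_iff.1 hV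
  filter_upwards [hs U₁ hU₁, ht U₂ hU₂] with c hcs hct
  rintro ⟨x, y⟩ ⟨hx, hy⟩
  obtain ⟨u, hu, rfl⟩ := hcs hx
  obtain ⟨v, hv, rfl⟩ := hct hy
  exact ⟨(u, v), hU ⟨hu, hv⟩, rfl⟩

theorem vnbdd_induced_iff {τF : TopologicalSpace F} (φ : E →ₗ[𝕜] F) {s : Set E} :
    VNBdd 𝕜 (τF.induced φ) s ↔ VNBdd 𝕜 τF (φ '' s) := by
  let _ := τF
  let _ := τF.induced φ
  change IsVonNBounded 𝕜 s ↔ IsVonNBounded 𝕜 (φ '' s)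
  simp_rw [isVonNBounded_iff_tendsto_smallSets_nhds, nhds_induced, map_zero,
    smallSets_comap_eq_comap_image, tendsto_comap_iff, Function.comp_def, ← image_smul,
    image_image, map_smul]

theorem BddMap.comp {τE : TopologicalSpace E} {τF : TopologicalSpace F}
    {τG : TopologicalSpace G} {g : F → G} {f : E → F}
    (hg : BddMap 𝕜 τF τG g) (hf : BddMap 𝕜 τE τF f) : BddMap 𝕜 τE τG (g ∘ f) := by
  intro s hs
  rw [image_comp]
  exact hg _ (hf s hs)

theorem LinearMap.bddMap_of_continuous {τE : TopologicalSpace E} {τF : TopologicalSpace F}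
    (f : E →ₗ[𝕜] F) (hf : Continuous[τE, τF] f) : BddMap 𝕜 τE τF f := by
  let _ := τE
  let _ := τF
  exact fun s hs => IsVonNBounded.image hs (⟨f, hf⟩ : E →L[𝕜] F)

theorem VNBdd.fst [TopologicalSpace E] [TopologicalSpace F] {B : Set (E × F)}
    (hB : VNBdd 𝕜 inferInstance B) : VNBdd 𝕜 inferInstance (Prod.fst '' B) :=
  (LinearMap.fst 𝕜 E F).bddMap_of_continuous continuous_fst B hB

theorem VNBdd.snd [TopologicalSpace E] [TopologicalSpace F] {B : Set (E × F)}
    (hB : VNBdd 𝕜 inferInstance B) : VNBdd 𝕜 inferInstance (Prod.snd '' B) :=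
  (LinearMap.snd 𝕜 E F).bddMap_of_continuous continuous_snd B hB

theorem bddMap_swap [TopologicalSpace E] [TopologicalSpace F] :
    BddMap 𝕜 inferInstance inferInstance (Prod.swap : E × F → F × E) :=
  (LinearEquiv.prodComm 𝕜 E F).toLinearMap.bddMap_of_continuous continuous_swap

theorem FamBdd.bddMap {τE : TopologicalSpace E} {τF : TopologicalSpace F} {S : Set (E → F)}
    (hS : FamBdd 𝕜 τE τF S) {f : E → F} (hf : f ∈ S) : BddMap 𝕜 τE τF f :=
  fun s hs => (hS s hs).subset (subset_biUnion_of_mem (u := fun f : E → F => f '' s) hf)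

theorem famBdd_singleton_iff {τE : TopologicalSpace E} {τF : TopologicalSpace F} {f : E → F} :
    FamBdd 𝕜 τE τF {f} ↔ BddMap 𝕜 τE τF f := by
  simp only [FamBdd, BddMap, biUnion_singleton]

theorem FamBdd.comp {τE : TopologicalSpace E} {τF : TopologicalSpace F}
    {τG : TopologicalSpace G} {S : Set (F → G)} {h : E → F}
    (hS : FamBdd 𝕜 τF τG S) (hh : BddMap 𝕜 τE τF h) : FamBdd 𝕜 τE τG ((· ∘ h) '' S) := by
  intro s hs
  simpa only [biUnion_image, image_comp] using hS _ (hh s hs)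

theorem Absorbs.biUnion_image {S : Set (E →ₗ[𝕜] F)} {V : Set E} {U : Set F} {s : Set E}
    (hs : Absorbs 𝕜 V s) (hVU : ∀ g ∈ S, MapsTo g V U) : Absorbs 𝕜 U (⋃ g ∈ S, g '' s) :=
  hs.eventually.mono fun c hc => iUnion₂_subset fun g hg =>
    (image_mono hc).trans ((image_smul_set g c V).trans_subset
      (smul_set_mono (hVU g hg).image_subset))

theorem RCConvex.preimage {s : Set F} (hs : RCConvex 𝕜 s) (f : E →ₗ[𝕜] F) :
    RCConvex 𝕜 (f ⁻¹' s) := by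
  intro x hx y hy t ht₀ ht₁
  simpa only [mem_preimage, map_add, map_smul] using hs hx hy t ht₀ ht₁

theorem IsLCTop.induced {τF : TopologicalSpace F} (hF : IsLCTop 𝕜 F τF) (f : E →ₗ[𝕜] F) :
    IsLCTop 𝕜 E (τF.induced f) := by
  let _ := τF
  have := hF.1.1
  have := hF.1.2
  refine ⟨⟨topologicalAddGroup_induced f.toAddMonoidHom,
    continuousSMul_induced (f := f.toMulActionHom)⟩, fun U hU => ?_⟩
  rw [nhds_induced, map_zero] at hU
  obtain ⟨W, hW, hWU⟩ := hU
  obtain ⟨W', hW', hW'W, hconv⟩ := hF.2 W hW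
  refine ⟨f ⁻¹' W', ?_, (preimage_mono hW'W).trans hWU, hconv.preimage f⟩
  rw [nhds_induced, map_zero]
  exact preimage_mem_comap hW'

end Bornology

section TensorLift

variable {𝕜 : Type*} [RCLike 𝕜] {M N P : Type*} [AddCommGroup M] [Module 𝕜 M]
  [AddCommGroup N] [Module 𝕜 N] [AddCommGroup P] [Module 𝕜 P]

def IsBilinMap.lift {f : M × N → P} (hf : IsBilinMap 𝕜 f) : M ⊗[𝕜] N →ₗ[𝕜] P :=
  TensorProduct.lift (LinearMap.mk₂ 𝕜 (fun m n => f (m, n)) hf.1 hf.2.1 hf.2.2.1 hf.2.2.2)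

@[simp]
theorem IsBilinMap.lift_tmul {f : M × N → P} (hf : IsBilinMap 𝕜 f) (m : M) (n : N) :
    hf.lift (m ⊗ₜ n) = f (m, n) :=
  rfl

theorem isBilinMap_comp_tmul (φ : M ⊗[𝕜] N →ₗ[𝕜] P) :
    IsBilinMap 𝕜 fun p : M × N => φ (p.1 ⊗ₜ p.2) := by
  refine ⟨?_, ?_, ?_, ?_⟩ <;> intros <;>
    simp [TensorProduct.add_tmul, TensorProduct.tmul_add, ← TensorProduct.smul_tmul',
      TensorProduct.tmul_smul]

theorem IsBetaTensorTop.continuous_iff_bddMap [TopologicalSpace M] [TopologicalSpace N]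
    [TopologicalSpace P] (hP : IsLCTop 𝕜 P inferInstance) {τT : TopologicalSpace (M ⊗[𝕜] N)}
    (hτT : IsBetaTensorTop 𝕜 inferInstance inferInstance τT) (φ : M ⊗[𝕜] N →ₗ[𝕜] P) :
    Continuous[τT, _] φ ↔
      BddMap 𝕜 inferInstance inferInstance fun p : M × N => φ (p.1 ⊗ₜ p.2) := by
  refine ⟨fun hφ => (φ.bddMap_of_continuous hφ).comp hτT.2.1, fun hφ => ?_⟩
  refine continuous_iff_le_induced.2 (hτT.2.2 _ (hP.induced φ) fun s hs => ?_)
  exact (vnbdd_induced_iff φ).2 (by simpa only [image_image] using hφ s hs)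

theorem IsProjTensorTop.continuous_iff [TopologicalSpace M] [TopologicalSpace N]
    [TopologicalSpace P] (hP : IsLCTop 𝕜 P inferInstance) {τT : TopologicalSpace (M ⊗[𝕜] N)}
    (hτT : IsProjTensorTop 𝕜 inferInstance inferInstance τT) (φ : M ⊗[𝕜] N →ₗ[𝕜] P) :
    Continuous[τT, _] φ ↔ Continuous fun p : M × N => φ (p.1 ⊗ₜ p.2) :=
  ⟨fun hφ => hφ.comp hτT.2.1, fun hφ => continuous_iff_le_induced.2
    (hτT.2.2 _ (hP.induced φ) (continuous_induced_rng.2 hφ))⟩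

end TensorLift

section BalancedQuotient

variable {𝕜 : Type*} [RCLike 𝕜] {A : Type*} [CommRing A] [Algebra 𝕜 A]
  {M N P : Type*} [AddCommGroup M] [Module 𝕜 M] [Module A M]
  [AddCommGroup N] [Module 𝕜 N] [Module A N] [AddCommGroup P] [Module 𝕜 P]
  {J : Submodule 𝕜 (M ⊗[𝕜] N)}

theorem mkQ_smul_tmul (hJ : balancedRelComm 𝕜 A M N ≤ J) (a : A) (m : M) (n : N) :
    J.mkQ ((a • m) ⊗ₜ n) = J.mkQ (m ⊗ₜ (a • n)) :=
  (Submodule.Quotient.eq J).2 (hJ (Submodule.subset_span ⟨a, m, n, rfl⟩))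

theorem balancedRelComm_le_ker {φ : M ⊗[𝕜] N →ₗ[𝕜] P}
    (hφ : ∀ (a : A) (m : M) (n : N), φ ((a • m) ⊗ₜ n) = φ (m ⊗ₜ (a • n))) :
    balancedRelComm 𝕜 A M N ≤ LinearMap.ker φ :=
  Submodule.span_le.2 <| by
    rintro _ ⟨a, m, n, rfl⟩
    simp [hφ]

theorem le_ker_of_coe_eq_closure [TopologicalSpace P] [T1Space P]
    {τ : TopologicalSpace (M ⊗[𝕜] N)}
    (hJ : (J : Set (M ⊗[𝕜] N)) = closure[τ] (balancedRelComm 𝕜 A M N))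
    {φ : M ⊗[𝕜] N →ₗ[𝕜] P} (hφc : Continuous[τ, _] φ)
    (hφ : ∀ (a : A) (m : M) (n : N), φ ((a • m) ⊗ₜ n) = φ (m ⊗ₜ (a • n))) :
    J ≤ LinearMap.ker φ := by
  let _ := τ
  intro x hx
  rw [← SetLike.mem_coe, hJ] at hx
  exact closure_minimal (balancedRelComm_le_ker hφ) (isClosed_singleton.preimage hφc) hx

variable [Module A P]

theorem isABilinMap_comp_mkQ_tmul (hJ : balancedRelComm 𝕜 A M N ≤ J)
    {g : M ⊗[𝕜] N ⧸ J →ₗ[𝕜] P}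
    (hg : ∀ (a : A) (m : M) (n : N), g (J.mkQ ((a • m) ⊗ₜ n)) = a • g (J.mkQ (m ⊗ₜ n))) :
    IsABilinMap A fun p : M × N => g (J.mkQ (p.1 ⊗ₜ p.2)) :=
  ⟨hg, fun a m n => (congrArg g (mkQ_smul_tmul hJ a m n)).symm.trans (hg a m n)⟩

theorem bijOn_comp_mkQ_tmul [TopologicalSpace P] [T1Space P] {τ : TopologicalSpace (M ⊗[𝕜] N)}
    (hJ : (J : Set (M ⊗[𝕜] N)) = closure[τ] (balancedRelComm 𝕜 A M N))
    {goodQ : (M ⊗[𝕜] N ⧸ J →ₗ[𝕜] P) → Prop} {good : (M × N → P) → Prop}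
    (hgoodQ : ∀ g, goodQ g ↔ Continuous[τ, _] (g ∘ₗ J.mkQ))
    (hgood : ∀ φ : M ⊗[𝕜] N →ₗ[𝕜] P, good (fun p => φ (p.1 ⊗ₜ p.2)) ↔ Continuous[τ, _] φ) :
    BijOn (fun (g : M ⊗[𝕜] N ⧸ J →ₗ[𝕜] P) => fun p : M × N => g (J.mkQ (p.1 ⊗ₜ[𝕜] p.2)))
      {g | goodQ g ∧ ∀ (a : A) (m : M) (n : N),
        g (J.mkQ ((a • m) ⊗ₜ[𝕜] n)) = a • g (J.mkQ (m ⊗ₜ[𝕜] n))}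
      {f | good f ∧ IsBilinMap 𝕜 f ∧ IsABilinMap A f} := by
  have hJle : balancedRelComm 𝕜 A M N ≤ J := by
    let _ := τ
    intro x hx
    rw [← SetLike.mem_coe, hJ]
    exact subset_closure hx
  refine ⟨?_, fun g₁ _ g₂ _ h =>
    Submodule.linearMap_qext _ (TensorProduct.ext' fun m n => congrFun h (m, n)), ?_⟩
  · rintro g ⟨hg, hgA⟩
    exact ⟨(hgood _).2 ((hgoodQ g).1 hg), isBilinMap_comp_tmul (g ∘ₗ J.mkQ),
      isABilinMap_comp_mkQ_tmul hJle hgA⟩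
  · rintro f ⟨hf, hbil, habil⟩
    have hφc : Continuous[τ, _] hbil.lift := (hgood hbil.lift).1 hf
    have hker : J ≤ LinearMap.ker hbil.lift :=
      le_ker_of_coe_eq_closure hJ hφc fun a m n => by simp [habil.1, habil.2]
    refine ⟨J.liftQ hbil.lift hker, ⟨(hgoodQ _).2 ?_, habil.1⟩, rfl⟩
    rwa [Submodule.liftQ_mkQ]

end BalancedQuotient

section UniformFamily

variable {𝕜 : Type*} [RCLike 𝕜] {ι E P : Type*} [AddCommGroup E] [Module 𝕜 E]
  [AddCommGroup P] [Module 𝕜 P] [UniformSpace P] [IsUniformAddGroup P]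

abbrev uniformFamilyTopology (F : ι → E →ₗ[𝕜] P) : TopologicalSpace E :=
  (UniformFun.topologicalSpace ι P).induced fun x => UniformFun.ofFun fun i => F i x

theorem uniformFamilyTopology_nhds_zero_hasBasis (F : ι → E →ₗ[𝕜] P) :
    (@nhds E (uniformFamilyTopology F) 0).HasBasis (· ∈ 𝓝 (0 : P))
      fun V => {x | ∀ i, F i x ∈ V} := by
  rw [uniformFamilyTopology, nhds_induced]
  simp only [map_zero]
  exact UniformFun.hasBasis_nhds_zero.comap _

theorem isLCTop_uniformFamilyTopology (hP : IsLCTop 𝕜 P inferInstance) (F : ι → E →ₗ[𝕜] P)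
    (hF : ∀ x, IsVonNBounded 𝕜 (range fun i => F i x)) :
    IsLCTop 𝕜 E (uniformFamilyTopology F) := by
  have := hP.1.2
  let Φ : E →ₗ[𝕜] (ι → P) := LinearMap.pi F
  let _ := uniformFamilyTopology F
  have hΦ : IsInducing (UniformFun.ofFun ∘ Φ) := ⟨rfl⟩
  let ofFun : (ι → P) →+ UniformFun ι P := AddMonoidHom.id _
  refine ⟨⟨hΦ.topologicalAddGroup (ofFun.comp Φ.toAddMonoidHom),
    UniformFun.continuousSMul_induced_of_range_bounded 𝕜 ι P E Φ hΦ hF⟩, fun U hU => ?_⟩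
  have hb := uniformFamilyTopology_nhds_zero_hasBasis F
  obtain ⟨V, hV, hVU⟩ := hb.mem_iff.1 hU
  obtain ⟨W, hW, hWV, hconv⟩ := hP.2 V hV
  refine ⟨_, hb.mem_of_mem hW, fun x hx => hVU fun i => hWV (hx i), ?_⟩
  intro x hx y hy t ht₀ ht₁ i
  simpa only [map_add, map_smul] using hconv (hx i) (hy i) t ht₀ ht₁

theorem vnbdd_uniformFamilyTopology {F : ι → E →ₗ[𝕜] P} {s : Set E}
    (hs : VNBdd 𝕜 inferInstance (⋃ i, F i '' s)) : VNBdd 𝕜 (uniformFamilyTopology F) s := by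
  intro V hV
  obtain ⟨W, hW, hWV⟩ := (uniformFamilyTopology_nhds_zero_hasBasis F).mem_iff.1 hV
  refine Absorbs.mono_left ?_ hWV
  filter_upwards [hs W hW, eventually_ne_cobounded 0] with c hc hc₀ x hx
  rw [mem_smul_set_iff_inv_smul_mem₀ hc₀]
  intro i
  have := hc (mem_iUnion.2 ⟨i, mem_image_of_mem _ hx⟩)
  rwa [mem_smul_set_iff_inv_smul_mem₀ hc₀, ← map_smul] at this

end UniformFamily

section Equibounded

variable {𝕜 : Type*} [RCLike 𝕜] {M N P : Type*} [AddCommGroup M] [Module 𝕜 M]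
  [TopologicalSpace M] [ContinuousSMul 𝕜 M] [AddCommGroup N] [Module 𝕜 N] [TopologicalSpace N]
  [ContinuousSMul 𝕜 N] [AddCommGroup P] [Module 𝕜 P] [TopologicalSpace P]
  {τT : TopologicalSpace (M ⊗[𝕜] N)}

/-- The topology of uniform convergence on the family is locally convex and makes `⊗` bounded,
so it is coarser than `τT`. -/
theorem IsBetaTensorTop.setOf_forall_mem_nhds_zero (hP : IsLCTop 𝕜 P inferInstance)
    (hτT : IsBetaTensorTop 𝕜 inferInstance inferInstance τT) {ι : Type*}
    (F : ι → M ⊗[𝕜] N →ₗ[𝕜] P)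
    (hF : ∀ B : Set (M × N), VNBdd 𝕜 inferInstance B →
      VNBdd 𝕜 inferInstance (⋃ i, F i '' ((fun p : M × N => p.1 ⊗ₜ[𝕜] p.2) '' B)))
    {U : Set P} (hU : U ∈ 𝓝 0) : {x | ∀ i, F i x ∈ U} ∈ @nhds _ τT 0 := by
  have := hP.1.1
  have := hP.1.2
  let _ := IsTopologicalAddGroup.rightUniformSpace P
  have := isUniformAddGroup_of_addCommGroup (G := P)
  have hpt : ∀ x, IsVonNBounded 𝕜 (range fun i => F i x) := by
    intro x
    induction x using TensorProduct.induction_on with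
    | zero => exact (isVonNBounded_singleton 0).subset (by rintro _ ⟨i, rfl⟩; simp)
    | tmul m n =>
      refine (hF {(m, n)} (vnbdd_singleton _)).subset ?_
      rintro _ ⟨i, rfl⟩
      exact mem_iUnion.2 ⟨i, _, ⟨(m, n), rfl, rfl⟩, rfl⟩
    | add x y hx hy =>
      refine (hx.add hy).subset ?_
      rintro _ ⟨i, rfl⟩
      exact ⟨_, ⟨i, rfl⟩, _, ⟨i, rfl⟩, (map_add _ _ _).symm⟩
  have hle : τT ≤ uniformFamilyTopology F :=
    hτT.2.2 _ (isLCTop_uniformFamilyTopology hP F hpt) fun B hB =>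
      vnbdd_uniformFamilyTopology (hF B hB)
  exact nhds_mono hle ((uniformFamilyTopology_nhds_zero_hasBasis F).mem_of_mem hU)

end Equibounded

section BetaQuotient

variable {𝕜 : Type*} [RCLike 𝕜] {M N P : Type*} [AddCommGroup M] [Module 𝕜 M]
  [TopologicalSpace M] [AddCommGroup N] [Module 𝕜 N] [TopologicalSpace N]
  [AddCommGroup P] [Module 𝕜 P] [TopologicalSpace P] (hP : IsLCTop 𝕜 P inferInstance)
  {τT : TopologicalSpace (M ⊗[𝕜] N)} (hτT : IsBetaTensorTop 𝕜 inferInstance inferInstance τT)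
  (J : Submodule 𝕜 (M ⊗[𝕜] N))
include hP hτT

theorem IsBetaTensorTop.bddMap_quotient_iff (g : M ⊗[𝕜] N ⧸ J →ₗ[𝕜] P) :
    BddMap 𝕜 (τT.coinduced J.mkQ) inferInstance g ↔ Continuous[τT, _] (g ∘ₗ J.mkQ) := by
  rw [hτT.continuous_iff_bddMap hP]
  refine ⟨fun hg => hg.comp ((J.mkQ.bddMap_of_continuous continuous_coinduced_rng).comp
    hτT.2.1), fun hg => g.bddMap_of_continuous ?_⟩
  rw [continuous_coinduced_dom]
  exact (hτT.continuous_iff_bddMap hP _).2 hg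

theorem IsBetaTensorTop.famBdd_quotient_iff [ContinuousSMul 𝕜 M] [ContinuousSMul 𝕜 N]
    (S : Set (M ⊗[𝕜] N ⧸ J →ₗ[𝕜] P)) :
    FamBdd 𝕜 (τT.coinduced J.mkQ) inferInstance
        ((fun g : M ⊗[𝕜] N ⧸ J →ₗ[𝕜] P => (g : M ⊗[𝕜] N ⧸ J → P)) '' S) ↔
      FamBdd 𝕜 inferInstance inferInstance
        ((fun (g : M ⊗[𝕜] N ⧸ J →ₗ[𝕜] P) => fun p : M × N => g (J.mkQ (p.1 ⊗ₜ[𝕜] p.2))) ''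
          S) := by
  constructor
  · intro hS
    have := hS.comp ((J.mkQ.bddMap_of_continuous continuous_coinduced_rng).comp hτT.2.1)
    rwa [image_image] at this
  intro hS s hs U hU
  have hF : ∀ B : Set (M × N), VNBdd 𝕜 inferInstance B → VNBdd 𝕜 inferInstance
      (⋃ g : S, (g.1 ∘ₗ J.mkQ) '' ((fun p : M × N => p.1 ⊗ₜ[𝕜] p.2) '' B)) := by
    intro B hB
    refine (hS B hB).subset ?_
    rintro _ ⟨_, ⟨g, rfl⟩, _, ⟨p, hp, rfl⟩, rfl⟩
    exact mem_biUnion (mem_image_of_mem _ g.2) (mem_image_of_mem _ hp)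
  have hW := hτT.setOf_forall_mem_nhds_zero hP _ hF hU
  let _ := τT
  have := hτT.1.1.1
  have hWQ := J.isOpenMap_mkQ.image_mem_nhds hW
  rw [map_zero] at hWQ
  rw [biUnion_image]
  exact (hs _ hWQ).biUnion_image fun g hg _ ⟨x, hx, hxy⟩ => hxy ▸ hx ⟨g, hg⟩

end BetaQuotient

section Curry

theorem biUnion_biUnion_image_curry {α β γ : Type*} (S : Set (α × β → γ)) (B : Set α)
    (s : Set β) :
    (⋃ φ ∈ ⋃ h ∈ Function.curry '' S, h '' B, φ '' s) = ⋃ f ∈ S, f '' (B ×ˢ s) := by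
  ext y
  simp only [mem_iUnion, mem_image, mem_prod, exists_prop, Prod.exists]
  aesop

variable {𝕜 : Type*} [RCLike 𝕜] {M N P : Type*} [AddCommGroup M] [Module 𝕜 M]
  [TopologicalSpace M] [AddCommGroup N] [Module 𝕜 N] [TopologicalSpace N]
  [AddCommGroup P] [Module 𝕜 P] [TopologicalSpace P]

theorem famBdd_iff_curFamBdd (S : Set (M × N → P)) :
    FamBdd 𝕜 inferInstance inferInstance S ↔
      CurFamBdd 𝕜 inferInstance inferInstance inferInstance (Function.curry '' S) := by
  refine ⟨fun hS B hB s hs => ?_, fun hS B hB => ?_⟩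
  · rw [biUnion_biUnion_image_curry]
    exact hS _ (hB.prod hs)
  · refine (hS _ hB.fst _ hB.snd).subset ?_
    rw [biUnion_biUnion_image_curry]
    exact biUnion_mono subset_rfl fun f _ => image_mono subset_fst_image_prod_snd_image

theorem bddMap_iff_famBdd_image_curry (f : M × N → P) :
    BddMap 𝕜 inferInstance inferInstance f ↔
      ∀ B : Set M, VNBdd 𝕜 inferInstance B → FamBdd 𝕜 inferInstance inferInstance
        (Function.curry f '' B) := by
  simpa only [famBdd_singleton_iff, CurFamBdd, image_singleton, biUnion_singleton] using
    famBdd_iff_curFamBdd (𝕜 := 𝕜) {f}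

theorem famBdd_iff_curFamBdd_flip (S : Set (M × N → P)) :
    FamBdd 𝕜 inferInstance inferInstance S ↔ CurFamBdd 𝕜 inferInstance inferInstance
      inferInstance ((fun (f : M × N → P) => fun n m => f (m, n)) '' S) := by
  have hS : (fun (f : M × N → P) => fun n m => f (m, n)) '' S =
      Function.curry '' ((· ∘ Prod.swap) '' S) := by
    rw [image_image]
    rfl
  rw [hS, ← famBdd_iff_curFamBdd]
  refine ⟨fun h => h.comp bddMap_swap, fun h => ?_⟩
  simpa [image_image, Function.comp_assoc] using h.comp bddMap_swap

end Curry

section BilinearMaps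

variable {𝕜 : Type*} [RCLike 𝕜] {A : Type*} [CommRing A] {M N P : Type*}
  [AddCommGroup M] [Module 𝕜 M] [Module A M] [TopologicalSpace M]
  [AddCommGroup N] [Module 𝕜 N] [Module A N] [TopologicalSpace N]
  [AddCommGroup P] [Module 𝕜 P] [Module A P] [TopologicalSpace P]

variable (𝕜 A M N P) in
/-- `L^b_A(M, N; P)`. -/
def bddABilinMaps : Set (M × N → P) :=
  {f | BddMap 𝕜 inferInstance inferInstance f ∧ IsBilinMap 𝕜 f ∧ IsABilinMap A f}

theorem curry_bijOn_bddABilinMaps [ContinuousSMul 𝕜 M] :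
    BijOn Function.curry (bddABilinMaps 𝕜 A M N P)
      {h | IsCurriedBddAHom 𝕜 A inferInstance inferInstance inferInstance h} := by
  refine ⟨fun f ⟨hfb, hbil, habil⟩ => ?_, Function.curry_injective.injOn, fun h hh => ?_⟩
  · have hfam := (bddMap_iff_famBdd_image_curry f).1 hfb
    exact ⟨fun m m' => funext (hbil.1 m m'), fun c m => funext (hbil.2.1 c m),
      fun a m => funext (habil.1 a m), hbil.2.2.1, fun m c n => hbil.2.2.2 c m n,
      fun m a n => habil.2 a m n,
      fun m => (hfam {m} (vnbdd_singleton m)).bddMap (mem_image_of_mem _ rfl), hfam⟩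
  · obtain ⟨hadd, hsmul, hasmul, hadd₂, hsmul₂, hasmul₂, -, hfam⟩ := hh
    refine ⟨Function.uncurry h, ⟨(bddMap_iff_famBdd_image_curry _).2 hfam,
      ⟨fun m m' n => congrFun (hadd m m') n, fun c m n => congrFun (hsmul c m) n, hadd₂,
        fun c m n => hsmul₂ m c n⟩, fun a m n => congrFun (hasmul a m) n,
      fun a m n => hasmul₂ m a n⟩, Function.curry_uncurry h⟩

theorem comp_swap_mem_bddABilinMaps {f : M × N → P} (hf : f ∈ bddABilinMaps 𝕜 A M N P) :
    f ∘ Prod.swap ∈ bddABilinMaps 𝕜 A N M P := by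
  obtain ⟨hfb, ⟨hadd, hsmul, hadd₂, hsmul₂⟩, hasmul, hasmul₂⟩ := hf
  exact ⟨hfb.comp bddMap_swap,
    ⟨fun n n' m => hadd₂ m n n', fun c n m => hsmul₂ c m n, fun n m m' => hadd m m' n,
      fun c n m => hsmul c m n⟩, fun a n m => hasmul₂ a m n, fun a n m => hasmul a m n⟩

theorem comp_swap_bijOn_bddABilinMaps :
    BijOn (· ∘ Prod.swap) (bddABilinMaps 𝕜 A M N P) (bddABilinMaps 𝕜 A N M P) :=
  ⟨fun _ hf => comp_swap_mem_bddABilinMaps hf, Prod.swap_surjective.injective_comp_right.injOn,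
    fun g hg => ⟨g ∘ Prod.swap, comp_swap_mem_bddABilinMaps hg, by simp [Function.comp_assoc]⟩⟩

end BilinearMaps

theorem statement11_general {𝕜 : Type*} [RCLike 𝕜]
    -- A, a commutative bounded algebra
    (A : Type*) [CommRing A] [Algebra 𝕜 A] [TopologicalSpace A]
    -- M, N, P bounded A-modules
    (M : Type*) [AddCommGroup M] [Module 𝕜 M] [Module A M]
    [TopologicalSpace M] (hM : IsLCTop 𝕜 M (inferInstance))
    (N : Type*) [AddCommGroup N] [Module 𝕜 N] [Module A N]
    [TopologicalSpace N] (hN : IsLCTop 𝕜 N (inferInstance))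
    (P : Type*) [AddCommGroup P] [Module 𝕜 P] [Module A P]
    [TopologicalSpace P] [T2Space P] (hP : IsLCTop 𝕜 P (inferInstance))
    -- the bornological tensor product M ⊗_A^β N
    (τT : TopologicalSpace (TensorProduct 𝕜 M N))
    (hτT : IsBetaTensorTop 𝕜 (inferInstance) (inferInstance) τT)
    (J : Submodule 𝕜 (TensorProduct 𝕜 M N))
    (hJ : (J : Set (TensorProduct 𝕜 M N)) = @closure _ τT (balancedRelComm 𝕜 A M N)) :
    ∀ τQ : TopologicalSpace (TensorProduct 𝕜 M N ⧸ J), τQ = τT.coinduced J.mkQ →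
    -- L^b_A(M ⊗_A^β N, P) ≅ L^b_A(M, N; P) bornologically
    ((Set.BijOn (fun (g : TensorProduct 𝕜 M N ⧸ J →ₗ[𝕜] P) =>
          (fun p : M × N => g (J.mkQ (p.1 ⊗ₜ[𝕜] p.2))))
        {g | BddMap 𝕜 τQ (inferInstance) ⇑g ∧
             ∀ (a : A) (m : M) (n : N),
               g (J.mkQ ((a • m) ⊗ₜ[𝕜] n)) = a • g (J.mkQ (m ⊗ₜ[𝕜] n))}
        {f | BddMap 𝕜 (inferInstance : TopologicalSpace (M × N)) (inferInstance) f ∧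
             IsBilinMap 𝕜 f ∧ IsABilinMap A f} ∧
      ∀ S : Set (TensorProduct 𝕜 M N ⧸ J →ₗ[𝕜] P),
        S ⊆ {g | BddMap 𝕜 τQ (inferInstance) ⇑g ∧
             ∀ (a : A) (m : M) (n : N),
               g (J.mkQ ((a • m) ⊗ₜ[𝕜] n)) = a • g (J.mkQ (m ⊗ₜ[𝕜] n))} →
        (FamBdd 𝕜 τQ (inferInstance)
            ((fun g : TensorProduct 𝕜 M N ⧸ J →ₗ[𝕜] P =>
              (g : TensorProduct 𝕜 M N ⧸ J → P)) '' S) ↔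
         FamBdd 𝕜 (inferInstance : TopologicalSpace (M × N)) (inferInstance)
            ((fun (g : TensorProduct 𝕜 M N ⧸ J →ₗ[𝕜] P) =>
              (fun p : M × N => g (J.mkQ (p.1 ⊗ₜ[𝕜] p.2)))) '' S)))) ∧
    -- L^b_A(M, N; P) ≅ L^b_A(M, L^b_A(N, P)) bornologically
    ((Set.BijOn (fun (f : M × N → P) => Function.curry f)
        {f | BddMap 𝕜 (inferInstance : TopologicalSpace (M × N)) (inferInstance) f ∧
             IsBilinMap 𝕜 f ∧ IsABilinMap A f}
        {h | IsCurriedBddAHom 𝕜 A (inferInstance) (inferInstance) (inferInstance) h} ∧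
      ∀ S : Set (M × N → P),
        S ⊆ {f | BddMap 𝕜 (inferInstance : TopologicalSpace (M × N)) (inferInstance) f ∧
             IsBilinMap 𝕜 f ∧ IsABilinMap A f} →
        (FamBdd 𝕜 (inferInstance : TopologicalSpace (M × N)) (inferInstance) S ↔
         CurFamBdd 𝕜 (inferInstance) (inferInstance) (inferInstance)
           (Function.curry '' S)))) ∧
    -- L^b_A(M, N; P) ≅ L^b_A(N, L^b_A(M, P)) bornologically
    ((Set.BijOn (fun (f : M × N → P) => (fun n m => f (m, n)))
        {f | BddMap 𝕜 (inferInstance : TopologicalSpace (M × N)) (inferInstance) f ∧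
             IsBilinMap 𝕜 f ∧ IsABilinMap A f}
        {k | IsCurriedBddAHom 𝕜 A (inferInstance) (inferInstance) (inferInstance) k} ∧
      ∀ S : Set (M × N → P),
        S ⊆ {f | BddMap 𝕜 (inferInstance : TopologicalSpace (M × N)) (inferInstance) f ∧
             IsBilinMap 𝕜 f ∧ IsABilinMap A f} →
        (FamBdd 𝕜 (inferInstance : TopologicalSpace (M × N)) (inferInstance) S ↔
         CurFamBdd 𝕜 (inferInstance) (inferInstance) (inferInstance)
           ((fun (f : M × N → P) => (fun n m => f (m, n))) '' S)))) ∧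
    -- locally convex case: algebraic isomorphism L^c_A(M,N;P) ≅ L^c_A(M ⊗_A^π N, P)
    (∀ (_ : Continuous fun p : A × A => p.1 * p.2)
       (_ : Continuous fun p : A × M => p.1 • p.2)
       (_ : Continuous fun p : A × N => p.1 • p.2)
       (_ : Continuous fun p : A × P => p.1 • p.2)
       (τTπ : TopologicalSpace (TensorProduct 𝕜 M N))
       (_ : IsProjTensorTop 𝕜 (inferInstance) (inferInstance) τTπ)
       (Jπ : Submodule 𝕜 (TensorProduct 𝕜 M N))
       (_ : (Jπ : Set (TensorProduct 𝕜 M N)) = @closure _ τTπ (balancedRelComm 𝕜 A M N))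
       (τQπ : TopologicalSpace (TensorProduct 𝕜 M N ⧸ Jπ)), τQπ = τTπ.coinduced Jπ.mkQ →
      Set.BijOn (fun (g : TensorProduct 𝕜 M N ⧸ Jπ →ₗ[𝕜] P) =>
          (fun p : M × N => g (Jπ.mkQ (p.1 ⊗ₜ[𝕜] p.2))))
        {g | @Continuous _ _ τQπ (inferInstance) ⇑g ∧
             ∀ (a : A) (m : M) (n : N),
               g (Jπ.mkQ ((a • m) ⊗ₜ[𝕜] n)) = a • g (Jπ.mkQ (m ⊗ₜ[𝕜] n))}
        {f | Continuous f ∧ IsBilinMap 𝕜 f ∧ IsABilinMap A f}) := by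
  rintro τQ rfl
  have := hM.1.2
  have := hN.1.2
  refine ⟨⟨bijOn_comp_mkQ_tmul hJ (hτT.bddMap_quotient_iff hP J)
      (fun φ => (hτT.continuous_iff_bddMap hP φ).symm), fun S _ => hτT.famBdd_quotient_iff hP J S⟩,
    ⟨curry_bijOn_bddABilinMaps, fun S _ => famBdd_iff_curFamBdd S⟩,
    ⟨curry_bijOn_bddABilinMaps.comp comp_swap_bijOn_bddABilinMaps,
      fun S _ => famBdd_iff_curFamBdd_flip S⟩, ?_⟩
  rintro - - - - τTπ hτTπ Jπ hJπ τQπ rfl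
  exact bijOn_comp_mkQ_tmul hJπ (fun _ => continuous_coinduced_dom)
    fun φ => (hτTπ.continuous_iff hP φ).symm

theorem statement11 {𝕜 : Type*} [RCLike 𝕜]
    -- A, a commutative bounded algebra
    (A : Type*) [CommRing A] [Algebra 𝕜 A] [TopologicalSpace A] [T2Space A]
    (hA : IsLCTop 𝕜 A (inferInstance))
    (hAmul : BddMap 𝕜 (inferInstance : TopologicalSpace (A × A)) (inferInstance)
      (fun p : A × A => p.1 * p.2))
    -- M, N, P bounded A-modules
    (M : Type*) [AddCommGroup M] [Module 𝕜 M] [Module A M] [IsScalarTower 𝕜 A M]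
    [TopologicalSpace M] [T2Space M] (hM : IsLCTop 𝕜 M (inferInstance))
    (hMmod : BddMap 𝕜 (inferInstance : TopologicalSpace (A × M)) (inferInstance)
      (fun p : A × M => p.1 • p.2))
    (N : Type*) [AddCommGroup N] [Module 𝕜 N] [Module A N] [IsScalarTower 𝕜 A N]
    [TopologicalSpace N] [T2Space N] (hN : IsLCTop 𝕜 N (inferInstance))
    (hNmod : BddMap 𝕜 (inferInstance : TopologicalSpace (A × N)) (inferInstance)
      (fun p : A × N => p.1 • p.2))
    (P : Type*) [AddCommGroup P] [Module 𝕜 P] [Module A P] [IsScalarTower 𝕜 A P]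
    [TopologicalSpace P] [T2Space P] (hP : IsLCTop 𝕜 P (inferInstance))
    (hPmod : BddMap 𝕜 (inferInstance : TopologicalSpace (A × P)) (inferInstance)
      (fun p : A × P => p.1 • p.2))
    -- the bornological tensor product M ⊗_A^β N
    (τT : TopologicalSpace (TensorProduct 𝕜 M N))
    (hτT : IsBetaTensorTop 𝕜 (inferInstance) (inferInstance) τT)
    (J : Submodule 𝕜 (TensorProduct 𝕜 M N))
    (hJ : (J : Set (TensorProduct 𝕜 M N)) = @closure _ τT (balancedRelComm 𝕜 A M N)) :
    ∀ τQ : TopologicalSpace (TensorProduct 𝕜 M N ⧸ J), τQ = τT.coinduced J.mkQ →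
    -- L^b_A(M ⊗_A^β N, P) ≅ L^b_A(M, N; P) bornologically
    ((Set.BijOn (fun (g : TensorProduct 𝕜 M N ⧸ J →ₗ[𝕜] P) =>
          (fun p : M × N => g (J.mkQ (p.1 ⊗ₜ[𝕜] p.2))))
        {g | BddMap 𝕜 τQ (inferInstance) ⇑g ∧
             ∀ (a : A) (m : M) (n : N),
               g (J.mkQ ((a • m) ⊗ₜ[𝕜] n)) = a • g (J.mkQ (m ⊗ₜ[𝕜] n))}
        {f | BddMap 𝕜 (inferInstance : TopologicalSpace (M × N)) (inferInstance) f ∧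
             IsBilinMap 𝕜 f ∧ IsABilinMap A f} ∧
      ∀ S : Set (TensorProduct 𝕜 M N ⧸ J →ₗ[𝕜] P),
        S ⊆ {g | BddMap 𝕜 τQ (inferInstance) ⇑g ∧
             ∀ (a : A) (m : M) (n : N),
               g (J.mkQ ((a • m) ⊗ₜ[𝕜] n)) = a • g (J.mkQ (m ⊗ₜ[𝕜] n))} →
        (FamBdd 𝕜 τQ (inferInstance)
            ((fun g : TensorProduct 𝕜 M N ⧸ J →ₗ[𝕜] P =>
              (g : TensorProduct 𝕜 M N ⧸ J → P)) '' S) ↔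
         FamBdd 𝕜 (inferInstance : TopologicalSpace (M × N)) (inferInstance)
            ((fun (g : TensorProduct 𝕜 M N ⧸ J →ₗ[𝕜] P) =>
              (fun p : M × N => g (J.mkQ (p.1 ⊗ₜ[𝕜] p.2)))) '' S)))) ∧
    -- L^b_A(M, N; P) ≅ L^b_A(M, L^b_A(N, P)) bornologically
    ((Set.BijOn (fun (f : M × N → P) => Function.curry f)
        {f | BddMap 𝕜 (inferInstance : TopologicalSpace (M × N)) (inferInstance) f ∧
             IsBilinMap 𝕜 f ∧ IsABilinMap A f}
        {h | IsCurriedBddAHom 𝕜 A (inferInstance) (inferInstance) (inferInstance) h} ∧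
      ∀ S : Set (M × N → P),
        S ⊆ {f | BddMap 𝕜 (inferInstance : TopologicalSpace (M × N)) (inferInstance) f ∧
             IsBilinMap 𝕜 f ∧ IsABilinMap A f} →
        (FamBdd 𝕜 (inferInstance : TopologicalSpace (M × N)) (inferInstance) S ↔
         CurFamBdd 𝕜 (inferInstance) (inferInstance) (inferInstance)
           (Function.curry '' S)))) ∧
    -- L^b_A(M, N; P) ≅ L^b_A(N, L^b_A(M, P)) bornologically
    ((Set.BijOn (fun (f : M × N → P) => (fun n m => f (m, n)))
        {f | BddMap 𝕜 (inferInstance : TopologicalSpace (M × N)) (inferInstance) f ∧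
             IsBilinMap 𝕜 f ∧ IsABilinMap A f}
        {k | IsCurriedBddAHom 𝕜 A (inferInstance) (inferInstance) (inferInstance) k} ∧
      ∀ S : Set (M × N → P),
        S ⊆ {f | BddMap 𝕜 (inferInstance : TopologicalSpace (M × N)) (inferInstance) f ∧
             IsBilinMap 𝕜 f ∧ IsABilinMap A f} →
        (FamBdd 𝕜 (inferInstance : TopologicalSpace (M × N)) (inferInstance) S ↔
         CurFamBdd 𝕜 (inferInstance) (inferInstance) (inferInstance)
           ((fun (f : M × N → P) => (fun n m => f (m, n))) '' S)))) ∧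
    -- locally convex case: algebraic isomorphism L^c_A(M,N;P) ≅ L^c_A(M ⊗_A^π N, P)
    (∀ (_ : Continuous fun p : A × A => p.1 * p.2)
       (_ : Continuous fun p : A × M => p.1 • p.2)
       (_ : Continuous fun p : A × N => p.1 • p.2)
       (_ : Continuous fun p : A × P => p.1 • p.2)
       (τTπ : TopologicalSpace (TensorProduct 𝕜 M N))
       (_ : IsProjTensorTop 𝕜 (inferInstance) (inferInstance) τTπ)
       (Jπ : Submodule 𝕜 (TensorProduct 𝕜 M N))
       (_ : (Jπ : Set (TensorProduct 𝕜 M N)) = @closure _ τTπ (balancedRelComm 𝕜 A M N))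
       (τQπ : TopologicalSpace (TensorProduct 𝕜 M N ⧸ Jπ)), τQπ = τTπ.coinduced Jπ.mkQ →
      Set.BijOn (fun (g : TensorProduct 𝕜 M N ⧸ Jπ →ₗ[𝕜] P) =>
          (fun p : M × N => g (Jπ.mkQ (p.1 ⊗ₜ[𝕜] p.2))))
        {g | @Continuous _ _ τQπ (inferInstance) ⇑g ∧
             ∀ (a : A) (m : M) (n : N),
               g (Jπ.mkQ ((a • m) ⊗ₜ[𝕜] n)) = a • g (Jπ.mkQ (m ⊗ₜ[𝕜] n))}
        {f | Continuous f ∧ IsBilinMap 𝕜 f ∧ IsABilinMap A f}) :=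
  statement11_general A M hM N hN P hP τT hτT J hJ
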